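/- arXiv:2604.20838 — 4 statements merged into one kernel-verified Lean document; each statement's English description precedes it below -/
import Mathlib

section
/- Let V be a finite-dimensional vector space over 𝔽₂ and let A, B be subspaces with A ⊓ B = ⊥. Let a ∈ A and b ∈ B be nonzero. Then the four affine cosets A, B, b + A, a + B are pairwise distinct as subsets of V, the four points 0, b, a + b, a are pairwise distinct, and the following incidences hold: 0 ∈ A ∩ B, b ∈ B ∩ (b + A), a + b ∈ (b + A) ∩ (a + B), and a ∈ (a + B) ∩ A. Hence the sequence A, 0, B, b, b + A, a + b, a + B, a, A is an 8-cycle in the Tanner graph whose check nodes are affine cosets and whose variable nodes are points of V, with a check adjacent to a point exactly when the point lies in the coset. -/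
/-
Since `A ⊓ B = ⊥`, the nonzero vectors satisfy `a ∉ B` and `b ∉ A`. Each of the required
distinctions is witnessed by one of these two facts, so the closed walk through the eight
incidences repeats no vertex and is therefore an 8-cycle.
-/

/-- The affine coset `u + S` of a subspace `S` of an `𝔽₂`-vector space. -/
def coset {V : Type*} [AddCommGroup V] [Module (ZMod 2) V]
    (u : V) (S : Submodule (ZMod 2) V) : Set V :=
  (u + ·) '' (S : Set V)

/-- The Tanner graph whose variable nodes are the points of `V` and whose check nodes
are the affine cosets of `A` and of `B`, with a check adjacent to a point exactly when
the point lies in the coset. -/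
def Tanner (V : Type*) [AddCommGroup V] [Module (ZMod 2) V]
    (A B : Submodule (ZMod 2) V) : SimpleGraph (V ⊕ Set V) :=
  SimpleGraph.fromRel (fun p q =>
    match p, q with
    | Sum.inl x, Sum.inr s =>
        ((∃ u : V, s = coset u A) ∨ (∃ u : V, s = coset u B)) ∧ x ∈ s
    | _, _ => False)

lemma Submodule.notMem_of_disjoint {R M : Type*} [Semiring R] [AddCommMonoid M] [Module R M]
    {p q : Submodule R M} (h : Disjoint p q) {x : M} (hx : x ∈ q) (hx0 : x ≠ 0) : x ∉ p :=
  fun hxp => hx0 (Submodule.disjoint_def.mp h x hxp hx)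

section

variable {V : Type*} [AddCommGroup V] [Module (ZMod 2) V]

@[simp]
lemma mem_coset {u x : V} {S : Submodule (ZMod 2) V} : x ∈ coset u S ↔ x - u ∈ S := by
  constructor
  · rintro ⟨s, hs, rfl⟩
    simpa using hs
  · intro h
    exact ⟨x - u, h, add_sub_cancel u x⟩

lemma tanner_adj_inr_inl_iff {A B : Submodule (ZMod 2) V} {s : Set V} {x : V} :
    (Tanner V A B).Adj (.inr s) (.inl x) ↔
      ((∃ u : V, s = coset u A) ∨ (∃ u : V, s = coset u B)) ∧ x ∈ s := by
  simp [Tanner]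

lemma tanner_adj_coset_left (A B : Submodule (ZMod 2) V) {u x : V} (hx : x ∈ coset u A) :
    (Tanner V A B).Adj (.inr (coset u A)) (.inl x) :=
  tanner_adj_inr_inl_iff.mpr ⟨.inl ⟨u, rfl⟩, hx⟩

lemma tanner_adj_coset_right (A B : Submodule (ZMod 2) V) {u x : V} (hx : x ∈ coset u B) :
    (Tanner V A B).Adj (.inr (coset u B)) (.inl x) :=
  tanner_adj_inr_inl_iff.mpr ⟨.inr ⟨u, rfl⟩, hx⟩

end

theorem stmt8_general (V : Type*) [AddCommGroup V] [Module (ZMod 2) V]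
    (A B : Submodule (ZMod 2) V) (hAB : A ⊓ B = ⊥)
    (a b : V) (ha : a ∈ A) (hb : b ∈ B) (ha0 : a ≠ 0) (hb0 : b ≠ 0) :
    -- the four affine cosets A, B, b + A, a + B are pairwise distinct subsets of V
    (coset 0 A ≠ coset 0 B ∧ coset 0 A ≠ coset b A ∧ coset 0 A ≠ coset a B ∧
     coset 0 B ≠ coset b A ∧ coset 0 B ≠ coset a B ∧ coset b A ≠ coset a B) ∧
    -- the four points 0, b, a + b, a are pairwise distinct
    ((0 : V) ≠ b ∧ (0 : V) ≠ a + b ∧ (0 : V) ≠ a ∧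
     b ≠ a + b ∧ b ≠ a ∧ a + b ≠ a) ∧
    -- the incidences giving the 8-cycle:
    -- A - 0 - B - b - (b + A) - (a + b) - (a + B) - a - A
    ((0 : V) ∈ coset 0 A ∩ coset 0 B ∧
     b ∈ coset 0 B ∩ coset b A ∧
     a + b ∈ coset b A ∩ coset a B ∧
     a ∈ coset a B ∩ coset 0 A) ∧
    -- hence the sequence A, 0, B, b, b + A, a + b, a + B, a, A is an 8-cycle in the
    -- Tanner graph
    (∃ w : (Tanner V A B).Walk (Sum.inr (coset 0 A)) (Sum.inr (coset 0 A)),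
      w.IsCycle ∧ w.length = 8 ∧
      w.support =
        [Sum.inr (coset 0 A), Sum.inl 0, Sum.inr (coset 0 B), Sum.inl b,
         Sum.inr (coset b A), Sum.inl (a + b), Sum.inr (coset a B), Sum.inl a,
         Sum.inr (coset 0 A)]) := by
  have hdisj : Disjoint A B := disjoint_iff.mpr hAB
  have haB : a ∉ B := Submodule.notMem_of_disjoint hdisj.symm ha ha0
  have hbA : b ∉ A := Submodule.notMem_of_disjoint hdisj hb hb0
  have incidences : (0 : V) ∈ coset 0 A ∩ coset 0 B ∧ b ∈ coset 0 B ∩ coset b A ∧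
      a + b ∈ coset b A ∩ coset a B ∧ a ∈ coset a B ∩ coset 0 A := by
    simp [ha, hb]
  obtain ⟨⟨m0A, m0B⟩, ⟨mbB, mbbA⟩, ⟨mabbA, mabaB⟩, ⟨maaB, maA⟩⟩ := incidences
  have cosets : coset 0 A ≠ coset 0 B ∧ coset 0 A ≠ coset b A ∧ coset 0 A ≠ coset a B ∧
      coset 0 B ≠ coset b A ∧ coset 0 B ≠ coset a B ∧ coset b A ≠ coset a B :=
    ⟨ne_of_mem_of_not_mem' maA (by simpa using haB),
      ne_of_mem_of_not_mem' m0A (by simpa using hbA),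
      ne_of_mem_of_not_mem' m0A (by simpa using haB),
      ne_of_mem_of_not_mem' m0B (by simpa using hbA),
      ne_of_mem_of_not_mem' m0B (by simpa using haB),
      ne_of_mem_of_not_mem' mbbA (by rwa [mem_coset, Submodule.sub_mem_iff_right B hb])⟩
  have points : (0 : V) ≠ b ∧ (0 : V) ≠ a + b ∧ (0 : V) ≠ a ∧
      b ≠ a + b ∧ b ≠ a ∧ a + b ≠ a :=
    ⟨hb0.symm, fun h => haB (eq_neg_of_add_eq_zero_left h.symm ▸ neg_mem hb), ha0.symm,
      by simpa using ha0, fun h => haB (h ▸ hb), by simpa using hb0⟩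
  refine ⟨cosets, points,
    ⟨⟨m0A, m0B⟩, ⟨mbB, mbbA⟩, ⟨mabbA, mabaB⟩, ⟨maaB, maA⟩⟩, ?_⟩
  refine ⟨.cons (tanner_adj_coset_left A B m0A) <| .cons (tanner_adj_coset_right A B m0B).symm <|
    .cons (tanner_adj_coset_right A B mbB) <| .cons (tanner_adj_coset_left A B mbbA).symm <|
    .cons (tanner_adj_coset_left A B mabbA) <| .cons (tanner_adj_coset_right A B mabaB).symm <|
    .cons (tanner_adj_coset_right A B maaB) <| .cons (tanner_adj_coset_left A B maA).symm .nil,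
    ?_, rfl, rfl⟩
  refine SimpleGraph.Walk.isCycle_iff_isPath_tail_and_le_length.mpr ⟨.mk' ?_, by simp⟩
  simp [points, cosets, cosets.1.symm, cosets.2.1.symm, cosets.2.2.1.symm]

theorem stmt8 (V : Type*) [AddCommGroup V] [Module (ZMod 2) V]
    [FiniteDimensional (ZMod 2) V]
    (A B : Submodule (ZMod 2) V) (hAB : A ⊓ B = ⊥)
    (a b : V) (ha : a ∈ A) (hb : b ∈ B) (ha0 : a ≠ 0) (hb0 : b ≠ 0) :
    -- the four affine cosets A, B, b + A, a + B are pairwise distinct subsets of V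
    (coset 0 A ≠ coset 0 B ∧ coset 0 A ≠ coset b A ∧ coset 0 A ≠ coset a B ∧
     coset 0 B ≠ coset b A ∧ coset 0 B ≠ coset a B ∧ coset b A ≠ coset a B) ∧
    -- the four points 0, b, a + b, a are pairwise distinct
    ((0 : V) ≠ b ∧ (0 : V) ≠ a + b ∧ (0 : V) ≠ a ∧
     b ≠ a + b ∧ b ≠ a ∧ a + b ≠ a) ∧
    -- the incidences giving the 8-cycle:
    -- A - 0 - B - b - (b + A) - (a + b) - (a + B) - a - A
    ((0 : V) ∈ coset 0 A ∩ coset 0 B ∧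
     b ∈ coset 0 B ∩ coset b A ∧
     a + b ∈ coset b A ∩ coset a B ∧
     a ∈ coset a B ∩ coset 0 A) ∧
    -- hence the sequence A, 0, B, b, b + A, a + b, a + B, a, A is an 8-cycle in the
    -- Tanner graph
    (∃ w : (Tanner V A B).Walk (Sum.inr (coset 0 A)) (Sum.inr (coset 0 A)),
      w.IsCycle ∧ w.length = 8 ∧
      w.support =
        [Sum.inr (coset 0 A), Sum.inl 0, Sum.inr (coset 0 B), Sum.inl b,
         Sum.inr (coset b A), Sum.inl (a + b), Sum.inr (coset a B), Sum.inl a,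
         Sum.inr (coset 0 A)]) :=
  stmt8_general V A B hAB a b ha hb ha0 hb0
end

section
/- Let H_X and H_Z be the 192 × 512 base matrices over 𝔽₂ whose rows are the incidence vectors of all affine cosets of A = span{e₁,e₂,e₃}, B = span{e₄,e₅,e₆}, C = span{e₇,e₈,e₉} (for H_X) and of D₁ = span{e₁,e₄,e₇}, D₂ = span{e₂,e₅,e₈}, D₃ = span{e₃,e₆,e₉} (for H_Z) in V = 𝔽₂⁹. Then rank(H_X) = rank(H_Z) = 169 over 𝔽₂, and consequently the number of logical qubits of the CSS code defined by this pair is k = 512 − rank(H_X) − rank(H_Z) = 174. -/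
open scoped Classical

/-- `V = 𝔽₂⁹`. -/
abbrev V : Type := Fin 9 → ZMod 2

/-- The standard basis vectors `e₁, …, e₉` (zero-indexed as `e 0, …, e 8`). -/
def e (i : Fin 9) : V := Pi.single i 1

/-- The family `A, B, C`: `Xfam 0 = A = span{e₁,e₂,e₃}`, `Xfam 1 = B`, `Xfam 2 = C`. -/
def Xfam (i : Fin 3) : Submodule (ZMod 2) V :=
  Submodule.span (ZMod 2)
    {e ⟨3 * i.val, by have := i.isLt; omega⟩,
     e ⟨3 * i.val + 1, by have := i.isLt; omega⟩,
     e ⟨3 * i.val + 2, by have := i.isLt; omega⟩}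

/-- The family `D₁, D₂, D₃`: `Zfam j = span{e_j, e_{j+3}, e_{j+6}}` (zero-indexed). -/
def Zfam (j : Fin 3) : Submodule (ZMod 2) V :=
  Submodule.span (ZMod 2)
    {e ⟨j.val, by have := j.isLt; omega⟩,
     e ⟨j.val + 3, by have := j.isLt; omega⟩,
     e ⟨j.val + 6, by have := j.isLt; omega⟩}

/-- Row index of `H_X`: a family index `i` together with an affine coset of `Xfam i`,
encoded as an element of the quotient `V ⧸ Xfam i`. -/
abbrev RX : Type := (i : Fin 3) × (V ⧸ Xfam i)

/-- Row index of `H_Z`. -/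
abbrev RZ : Type := (j : Fin 3) × (V ⧸ Zfam j)

/-- The base matrix `H_X`: the row indexed by a coset is its incidence vector. -/
noncomputable def HX : Matrix RX V (ZMod 2) := fun r x =>
  if (Submodule.Quotient.mk x : V ⧸ Xfam r.1) = r.2 then 1 else 0

/-- The base matrix `H_Z`. -/
noncomputable def HZ : Matrix RZ V (ZMod 2) := fun s x =>
  if (Submodule.Quotient.mk x : V ⧸ Zfam s.1) = s.2 then 1 else 0

/-!
The incidence vectors of the cosets of `span {eᵢ | i ∈ T}` span exactly the functions
`𝔽₂⁹ → 𝔽₂` that depend only on the coordinates outside `T`. Writing `D s` for the functions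
depending only on the coordinates in `s`, we have `dim D s = 2 ^ #s`, `D s ⊓ D t = D (s ∩ t)` and
`(D s ⊔ D t) ⊓ D r = D (s ∩ r) ⊔ D (t ∩ r)`, so the dimension of `D s ⊔ D t ⊔ D r` is computed by
inclusion–exclusion. Both `H_X` and `H_Z` come from a partition of the nine coordinates into
three triples, giving rank `3 · 2⁶ - 3 · 2³ + 2⁰ = 169`.
-/

open Function Module Submodule Finset

section DependsOn

variable (R K : Type*) [Semiring R] [Field K] {ι : Type*} (α : Type*)

def dependsOnSubmodule (s : Set ι) : Submodule R ((ι → α) → R) where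
  carrier := {f | DependsOn f s}
  zero_mem' _ _ _ := rfl
  add_mem' hf hg _ _ h := congr_arg₂ (· + ·) (hf h) (hg h)
  smul_mem' c _ hf _ _ h := congr_arg (c • ·) (hf h)

variable {R α}

theorem dependsOnSubmodule_mono {s t : Set ι} (h : s ⊆ t) :
    dependsOnSubmodule R α s ≤ dependsOnSubmodule R α t :=
  fun _ hf => hf.mono h

theorem dependsOnSubmodule_inf (s t : Set ι) :
    dependsOnSubmodule R α s ⊓ dependsOnSubmodule R α t = dependsOnSubmodule R α (s ∩ t) := by
  refine le_antisymm ?_ (le_inf (dependsOnSubmodule_mono Set.inter_subset_left)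
    (dependsOnSubmodule_mono Set.inter_subset_right))
  rintro f ⟨hs, ht⟩ x y hxy
  calc f x = f (s.piecewise x y) := hs fun i hi => by simp [hi]
    _ = f y := ht fun i hi => by
      by_cases his : i ∈ s
      · simp [his, hxy i ⟨his, hi⟩]
      · simp [his]

theorem dependsOnSubmodule_sup_inf (s t r : Set ι) :
    (dependsOnSubmodule R α s ⊔ dependsOnSubmodule R α t) ⊓ dependsOnSubmodule R α r =
      dependsOnSubmodule R α (s ∩ r) ⊔ dependsOnSubmodule R α (t ∩ r) := by
  refine le_antisymm ?_ (le_inf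
    (sup_le_sup (dependsOnSubmodule_mono Set.inter_subset_left)
      (dependsOnSubmodule_mono Set.inter_subset_left))
    (sup_le (dependsOnSubmodule_mono Set.inter_subset_right)
      (dependsOnSubmodule_mono Set.inter_subset_right)))
  rintro _ ⟨hst, hr⟩
  obtain ⟨g, hg, h, hh, rfl⟩ := mem_sup.1 hst
  rcases isEmpty_or_nonempty (ι → α) with _ | ⟨⟨x₀⟩⟩
  · exact mem_sup_left fun x => isEmptyElim x
  -- `x ↦ r.piecewise x x₀` fixes `g + h`, and precomposing with it cuts both summands down to `r`.
  let ρ : (ι → α) → ι → α := fun x => r.piecewise x x₀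
  have hρ {u : Set ι} {φ : (ι → α) → R} (hφ : DependsOn φ u) : DependsOn (φ ∘ ρ) (u ∩ r) := by
    intro x y hxy
    refine hφ fun i hi => ?_
    by_cases hir : i ∈ r
    · simp [ρ, hir, hxy i ⟨hi, hir⟩]
    · simp [ρ, hir]
  refine mem_sup.2 ⟨g ∘ ρ, hρ hg, h ∘ ρ, hρ hh, funext fun x => ?_⟩
  exact (hr fun i hi => by simp [ρ, hi]).symm

theorem range_funLeft_eq_dependsOnSubmodule {Q : Type*} (π : (ι → α) → Q) {s : Set ι}
    (hπ : ∀ x y, π x = π y ↔ ∀ i ∈ s, x i = y i) :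
    LinearMap.range (LinearMap.funLeft R R π) = dependsOnSubmodule R α s := by
  ext f
  constructor
  · rintro ⟨g, rfl⟩ x y hxy
    exact congrArg g ((hπ x y).2 hxy)
  · intro hf
    obtain ⟨g, hg⟩ := (factorsThrough_iff f).1 fun x y h => hf ((hπ x y).1 h)
    exact ⟨g, hg.symm⟩

theorem finrank_dependsOnSubmodule [Fintype α] [Nonempty α] (s : Finset ι) :
    finrank K (dependsOnSubmodule K α (s : Set ι)) = Fintype.card α ^ #s := by
  have hsurj : Surjective (Set.domRestrict (π := fun _ => α) (s : Set ι)) := fun z =>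
    ⟨fun i => if h : i ∈ s then z ⟨i, h⟩ else Classical.arbitrary α, funext fun i => dif_pos i.2⟩
  rw [← range_funLeft_eq_dependsOnSubmodule (Set.domRestrict (s : Set ι))
      (fun x y => by simp [funext_iff]),
    LinearMap.finrank_range_of_inj (LinearMap.funLeft_injective_of_surjective _ _ _ hsurj),
    finrank_fintype_fun_eq_card, Fintype.card_fun]
  simp

end DependsOn

section InclusionExclusion

variable (K : Type*) [Field K] {ι : Type*} [Fintype ι] [DecidableEq ι] (α : Type*) [Fintype α]
  [Nonempty α]

local notation "𝒟" s:max => dependsOnSubmodule K α ((s : Finset ι) : Set ι)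

theorem finrank_dependsOnSubmodule_sup_sup (s t r : Finset ι) :
    finrank K ↥(𝒟 s ⊔ 𝒟 t ⊔ 𝒟 r) +
        (Fintype.card α ^ #(s ∩ t) + Fintype.card α ^ #(s ∩ r) + Fintype.card α ^ #(t ∩ r)) =
      Fintype.card α ^ #s + Fintype.card α ^ #t + Fintype.card α ^ #r +
        Fintype.card α ^ #(s ∩ t ∩ r) := by
  have hst := finrank_sup_add_finrank_inf_eq (𝒟 s) (𝒟 t)
  have hstr := finrank_sup_add_finrank_inf_eq (𝒟 s ⊔ 𝒟 t) (𝒟 r)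
  have hsrtr := finrank_sup_add_finrank_inf_eq (𝒟 (s ∩ r)) (𝒟 (t ∩ r))
  rw [dependsOnSubmodule_sup_inf, ← coe_inter, ← coe_inter] at hstr
  rw [dependsOnSubmodule_inf, ← coe_inter] at hst hsrtr
  rw [← inter_inter_distrib_right] at hsrtr
  simp only [finrank_dependsOnSubmodule] at hst hstr hsrtr
  omega

theorem finrank_iSup_dependsOnSubmodule_compl_of_partition {m : ℕ} (hι : Fintype.card ι = 3 * m)
    (T : Fin 3 → Finset ι) (hT : ∀ j, #(T j) = m) (hdisj : Pairwise (Disjoint on T)) :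
    finrank K ↥(⨆ j, 𝒟 (T j)ᶜ) + 3 * Fintype.card α ^ m = 3 * Fintype.card α ^ (2 * m) + 1 := by
  have hc₁ (j) : #(T j)ᶜ = 2 * m := by rw [card_compl, hT]; omega
  have hc₂ {i j} (hij : i ≠ j) : #((T i)ᶜ ∩ (T j)ᶜ) = m := by
    rw [← compl_union, card_compl, card_union_of_disjoint (hdisj hij), hT, hT]; omega
  have hc₃ : #((T 0)ᶜ ∩ (T 1)ᶜ ∩ (T 2)ᶜ) = 0 := by
    rw [← compl_union, ← compl_union, card_compl, card_union_of_disjoint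
      (disjoint_union_left.2 ⟨hdisj (by decide), hdisj (by decide)⟩),
      card_union_of_disjoint (hdisj (by decide)), hT, hT, hT]
    omega
  have := finrank_dependsOnSubmodule_sup_sup K α (T 0)ᶜ (T 1)ᶜ (T 2)ᶜ
  rw [hc₁, hc₁, hc₁, hc₂ (by decide), hc₂ (by decide), hc₂ (by decide), hc₃, pow_zero] at this
  rw [iSup_fin_three]
  linarith

end InclusionExclusion

section CosetIncidence

variable (K : Type*) [Field K]

theorem span_range_fiberIndicator {X Q : Type*} [Finite Q] [DecidableEq Q] (π : X → Q) :
    span K (Set.range fun q x => if π x = q then (1 : K) else 0) =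
      LinearMap.range (LinearMap.funLeft K K π) := by
  have : (fun q x => if π x = q then (1 : K) else 0) =
      LinearMap.funLeft K K π ∘ Pi.basisFun K Q := by
    ext q x
    simp [LinearMap.funLeft_apply, Pi.single_apply]
  rw [this, Set.range_comp, ← map_span, (Pi.basisFun K Q).span_eq, ← LinearMap.range_eq_map]

theorem quotient_mk_eq_mk_iff_spanSubset {ι : Type*} [Finite ι] {t : Set ι} {x y : ι → K} :
    (Submodule.Quotient.mk x : (ι → K) ⧸ Pi.spanSubset K t) = Submodule.Quotient.mk y ↔
      ∀ i ∈ tᶜ, x i = y i := by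
  simp [Submodule.Quotient.eq, Pi.mem_spanSubset_iff, sub_eq_zero]

-- The `if` is decided by the ambient `open scoped Classical`, exactly as in `HX` and `HZ`, so that
-- these are `cosetIncidenceMatrix (ZMod 2) Xfam` and `cosetIncidenceMatrix (ZMod 2) Zfam` by `rfl`.
noncomputable def cosetIncidenceMatrix {κ M : Type*} [AddCommGroup M] [Module K M]
    (F : κ → Submodule K M) : Matrix (Σ j, M ⧸ F j) M K :=
  fun r x => if Submodule.Quotient.mk x = r.2 then 1 else 0

theorem span_range_cosetIncidenceMatrix {ι κ : Type*} [Finite ι] [Finite K]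
    (F : κ → Submodule K (ι → K)) (T : κ → Set ι) (hF : ∀ j, F j = Pi.spanSubset K (T j)) :
    span K (Set.range (cosetIncidenceMatrix K F)) = ⨆ j, dependsOnSubmodule K K (T j)ᶜ := by
  obtain rfl : F = fun j => Pi.spanSubset K (T j) := funext hF
  unfold cosetIncidenceMatrix
  rw [Set.range_sigma_eq_iUnion_range, span_iUnion]
  refine iSup_congr fun j => ?_
  have : Finite ((ι → K) ⧸ Pi.spanSubset K (T j)) := Finite.of_surjective _ (mkQ_surjective _)
  exact (span_range_fiberIndicator K Submodule.Quotient.mk).trans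
    (range_funLeft_eq_dependsOnSubmodule _ fun _ _ => quotient_mk_eq_mk_iff_spanSubset K)

theorem finrank_span_range_cosetIncidenceMatrix_of_partition [Fintype K] {ι : Type*} [Fintype ι]
    [DecidableEq ι] {m : ℕ} (hι : Fintype.card ι = 3 * m)
    (F : Fin 3 → Submodule K (ι → K)) (T : Fin 3 → Finset ι)
    (hF : ∀ j, F j = Pi.spanSubset K ↑(T j)) (hT : ∀ j, #(T j) = m)
    (hdisj : Pairwise (Disjoint on T)) :
    finrank K ↥(span K (Set.range (cosetIncidenceMatrix K F))) + 3 * Fintype.card K ^ m =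
      3 * Fintype.card K ^ (2 * m) + 1 := by
  have hcompl : (fun j => dependsOnSubmodule K K (T j : Set ι)ᶜ) =
      fun j => dependsOnSubmodule K K ↑(T j)ᶜ := by
    simp only [Finset.coe_compl]
  rw [span_range_cosetIncidenceMatrix K F _ hF, hcompl]
  exact finrank_iSup_dependsOnSubmodule_compl_of_partition K K hι T hT hdisj

end CosetIncidence

theorem Xfam_eq_spanSubset (i : Fin 3) :
    Xfam i = Pi.spanSubset (ZMod 2) ↑({k | k.val / 3 = i.val} : Finset (Fin 9)) := by
  have : ({k | k.val / 3 = i.val} : Finset (Fin 9)) =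
      {⟨3 * i.val, by omega⟩, ⟨3 * i.val + 1, by omega⟩, ⟨3 * i.val + 2, by omega⟩} := by
    fin_cases i <;> decide
  simp [this, Xfam, Pi.spanSubset, e, Set.image_insert_eq]

theorem Zfam_eq_spanSubset (j : Fin 3) :
    Zfam j = Pi.spanSubset (ZMod 2) ↑({k | k.val % 3 = j.val} : Finset (Fin 9)) := by
  have : ({k | k.val % 3 = j.val} : Finset (Fin 9)) =
      {⟨j.val, by omega⟩, ⟨j.val + 3, by omega⟩, ⟨j.val + 6, by omega⟩} := by
    fin_cases j <;> decide
  simp [this, Zfam, Pi.spanSubset, e, Set.image_insert_eq]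

theorem stmt10 :
    Module.finrank (ZMod 2) ↥(Submodule.span (ZMod 2) (Set.range HX)) = 169 ∧
    Module.finrank (ZMod 2) ↥(Submodule.span (ZMod 2) (Set.range HZ)) = 169 ∧
    512 - Module.finrank (ZMod 2) ↥(Submodule.span (ZMod 2) (Set.range HX))
        - Module.finrank (ZMod 2) ↥(Submodule.span (ZMod 2) (Set.range HZ)) = 174 := by
  have hX : finrank (ZMod 2) ↥(span (ZMod 2) (Set.range HX)) + 24 = 193 := by
    rw [show HX = cosetIncidenceMatrix (ZMod 2) Xfam from rfl]
    simpa [ZMod.card] using finrank_span_range_cosetIncidenceMatrix_of_partition (ZMod 2)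
      (m := 3) rfl Xfam _ Xfam_eq_spanSubset (by decide) (by unfold Pairwise onFun; decide)
  have hZ : finrank (ZMod 2) ↥(span (ZMod 2) (Set.range HZ)) + 24 = 193 := by
    rw [show HZ = cosetIncidenceMatrix (ZMod 2) Zfam from rfl]
    simpa [ZMod.card] using finrank_span_range_cosetIncidenceMatrix_of_partition (ZMod 2)
      (m := 3) rfl Zfam _ Zfam_eq_spanSubset (by decide) (by unfold Pairwise onFun; decide)
  omega
end

section
/- Let H_X and H_Z be the 192 × 512 base matrices over 𝔽₂ whose rows are the incidence vectors of all affine cosets of A = span{e₁,e₂,e₃}, B = span{e₄,e₅,e₆}, C = span{e₇,e₈,e₉} (for H_X) and of D₁ = span{e₁,e₄,e₇}, D₂ = span{e₂,e₅,e₈}, D₃ = span{e₃,e₆,e₉} (for H_Z) in V = 𝔽₂⁹. Then the minimum distance of the CSS code defined by (H_X, H_Z) is exactly 8: every vector in ker(H_X) ⊆ 𝔽₂⁵¹² that is not in the row space of H_Z has Hamming weight at least 8, every vector in ker(H_Z) that is not in the row space of H_X has Hamming weight at least 8, and at least one of these two sets contains a vector of Hamming weight exactly 8. -/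
open scoped Classical

/-- The row space of a base matrix: the `𝔽₂`-span of its rows. -/
def rowSpace {R : Type*} (H : Matrix R V (ZMod 2)) : Submodule (ZMod 2) (V → ZMod 2) :=
  Submodule.span (ZMod 2) (Set.range H)

/-!
A nonzero `c ∈ ker H_X` has an even number of support points in every coset of `A`, `B`, `C`,
so from each support point one can move to another support point inside each of the three
coordinate blocks. Slicing the support along one block at a time, each slice again has this
property for the remaining blocks, so the support has at least `2 ^ 3` points; the same holds
for `H_Z`, whose subspaces `D_j` are also spanned by pairwise disjoint sets of coordinates.

The bound is attained by the indicator of `W = span{e₁, e₄, e₈}` (zero-indexed `{0, 3, 7}`): `W`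
meets each of `A`, `B`, `C` in a line, so every coset of them meets `W` evenly. It is not in the
row space of `H_Z` because the indicator of `W' = span{e₂, e₃, e₇}`, which meets each `D_j` in a
line, is orthogonal to every row of `H_Z` but has inner product `|W ∩ W'| = 1` with `1_W`.
-/

open Finset Function

theorem Finset.exists_ne_ne_zero_of_sum_eq_zero {α M : Type*} [AddCommMonoid M] {s : Finset α}
    {f : α → M} {a : α} (ha : a ∈ s) (hfa : f a ≠ 0) (hs : ∑ x ∈ s, f x = 0) :
    ∃ b ∈ s, b ≠ a ∧ f b ≠ 0 := by
  by_contra! h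
  exact hfa (by rwa [sum_eq_single_of_mem a ha h] at hs)

section Hypercube

variable {α ι : Type*} {β : ι → Type*}

theorem two_pow_card_le_card_of_forall_exists_neighbor (f : ∀ i, α → β i) (I : Finset ι)
    {S : Finset α} (hS : S.Nonempty)
    (hnbr : ∀ x ∈ S, ∀ i ∈ I, ∃ y ∈ S, f i y ≠ f i x ∧ ∀ j ∈ I, j ≠ i → f j y = f j x) :
    2 ^ #I ≤ #S := by
  induction I using Finset.induction_on generalizing S with
  | empty => simpa using hS.card_pos
  | insert i I hi ih =>
    have hslice (P : β i → Prop) [DecidablePred P] :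
        ∀ x ∈ S.filter (fun z => P (f i z)), ∀ j ∈ I, ∃ y ∈ S.filter (fun z => P (f i z)),
          f j y ≠ f j x ∧ ∀ k ∈ I, k ≠ j → f k y = f k x := by
      intro x hx j hj
      rw [mem_filter] at hx
      obtain ⟨y, hy, hyx, hfix⟩ := hnbr x hx.1 j (mem_insert_of_mem hj)
      have hiy : f i y = f i x := hfix i (mem_insert_self i I) (ne_of_mem_of_not_mem hj hi).symm
      exact ⟨y, mem_filter.2 ⟨hy, hiy ▸ hx.2⟩, hyx, fun k hk => hfix k (mem_insert_of_mem hk)⟩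
    -- The slices `f i · = f i x` and `f i · ≠ f i x` are both nonempty.
    obtain ⟨x, hx⟩ := hS
    obtain ⟨y, hy, hyx, -⟩ := hnbr x hx i (mem_insert_self i I)
    have hsame := ih (S := S.filter fun z => f i z = f i x) ⟨x, mem_filter.2 ⟨hx, rfl⟩⟩
      (hslice (· = f i x))
    have hother := ih (S := S.filter fun z => ¬f i z = f i x) ⟨y, mem_filter.2 ⟨hy, hyx⟩⟩
      (hslice (¬· = f i x))
    rw [card_insert_of_notMem hi, pow_succ, ← card_filter_add_card_filter_not
      (fun z => f i z = f i x)]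
    omega

end Hypercube

section CoordSpan

variable (K : Type*) {κ : Type*} [Semiring K] [DecidableEq κ]

def coordSpan (T : Set κ) : Submodule K (κ → K) :=
  Submodule.span K ((fun k => Pi.single k 1) '' T)

variable {K}

theorem single_mem_coordSpan {T : Set κ} {k : κ} (hk : k ∈ T) :
    Pi.single k 1 ∈ coordSpan K T :=
  Submodule.subset_span ⟨k, hk, rfl⟩

theorem mem_coordSpan_iff [Fintype κ] {T : Set κ} {x : κ → K} :
    x ∈ coordSpan K T ↔ ∀ k ∉ T, x k = 0 := by
  refine ⟨fun hx k hk => ?_, fun hx => ?_⟩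
  · induction hx using Submodule.span_induction with
    | mem y hy =>
      obtain ⟨l, hl, rfl⟩ := hy
      exact Pi.single_eq_of_ne (ne_of_mem_of_not_mem hl hk).symm _
    | zero => rfl
    | add y z _ _ hy hz => simp [hy, hz]
    | smul a y _ hy => simp [hy]
  · rw [pi_eq_sum_univ' x]
    refine Submodule.sum_mem _ fun k _ => ?_
    by_cases hk : k ∈ T
    · exact Submodule.smul_mem _ _ (single_mem_coordSpan hk)
    · simp [hx k hk]

theorem disjoint_coordSpan [Fintype κ] {T T' : Set κ} (h : Disjoint T T') :
    Disjoint (coordSpan K T) (coordSpan K T') := by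
  refine Submodule.disjoint_def.2 fun x hx hx' => funext fun k => ?_
  by_cases hk : k ∈ T
  · exact mem_coordSpan_iff.1 hx' k (Set.disjoint_left.1 h hk)
  · exact mem_coordSpan_iff.1 hx k hk

theorem card_coordSpan [Fintype κ] [Fintype K] (T : Finset κ) :
    Fintype.card (coordSpan K (T : Set κ)) = Fintype.card K ^ #T := by
  rw [← Fintype.card_coe T, ← Fintype.card_fun]
  refine Fintype.card_congr
    { toFun := fun x k => x.1 k
      invFun := fun g => ⟨fun k => if hk : k ∈ T then g ⟨k, hk⟩ else 0,
        mem_coordSpan_iff.2 fun k hk => dif_neg hk⟩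
      left_inv := fun x => Subtype.ext (funext fun k => ?_)
      right_inv := fun g => funext fun k => dif_pos k.2 }
  by_cases hk : k ∈ T
  · exact dif_pos hk
  · exact (dif_neg hk).trans (mem_coordSpan_iff.1 x.2 k hk).symm

end CoordSpan

section CosetIncidence

variable {K V ι : Type*} [Ring K] [AddCommGroup V] [Module K V] [Fintype V]

noncomputable def cosetIncidence (U : ι → Submodule K V) : Matrix ((i : ι) × (V ⧸ U i)) V K :=
  fun r x => if Submodule.Quotient.mk x = r.2 then 1 else 0

theorem cosetIncidence_mulVec_mk (U : ι → Submodule K V) (c : V → K) (i : ι) (x : V) :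
    (cosetIncidence U).mulVec c ⟨i, Submodule.Quotient.mk x⟩ = ∑ y with y - x ∈ U i, c y := by
  simp [cosetIncidence, Matrix.mulVec, dotProduct, Finset.sum_filter, Submodule.Quotient.eq]

theorem exists_sub_mem_of_cosetIncidence_mulVec_eq_zero {U : ι → Submodule K V} {c : V → K}
    (hc : (cosetIncidence U).mulVec c = 0) {x : V} (hx : c x ≠ 0) (i : ι) :
    ∃ y, c y ≠ 0 ∧ y ≠ x ∧ y - x ∈ U i := by
  have hsum := congrFun hc ⟨i, Submodule.Quotient.mk x⟩
  rw [cosetIncidence_mulVec_mk, Pi.zero_apply] at hsum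
  obtain ⟨y, hy, hyx, hcy⟩ :=
    exists_ne_ne_zero_of_sum_eq_zero (by simp) hx hsum
  exact ⟨y, hcy, hyx, (mem_filter.1 hy).2⟩

end CosetIncidence

section LowerBound

variable {K ι κ : Type*} [Ring K] [Fintype K] [DecidableEq K] [Fintype ι] [Fintype κ]
  [DecidableEq κ]

theorem two_pow_le_hammingNorm_of_mulVec_eq_zero {U : ι → Submodule K (κ → K)} {T : ι → Finset κ}
    (hU : ∀ i, U i = coordSpan K (T i : Set κ)) (hT : Pairwise (Disjoint on T))
    {c : (κ → K) → K} (hc : (cosetIncidence U).mulVec c = 0) (hc0 : c ≠ 0) :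
    2 ^ Fintype.card ι ≤ hammingNorm c := by
  obtain ⟨x, hx⟩ := Function.ne_iff.1 hc0
  refine two_pow_card_le_card_of_forall_exists_neighbor
    (fun i (z : κ → K) (k : T i) => z k) univ ⟨x, by simpa using hx⟩ fun z hz i _ => ?_
  obtain ⟨y, hy, hyz, hyz_mem⟩ :=
    exists_sub_mem_of_cosetIncidence_mulVec_eq_zero hc (mem_filter.1 hz).2 i
  have hvanish := mem_coordSpan_iff.1 (hU i ▸ hyz_mem)
  refine ⟨y, by simpa using hy, fun heq => hyz (funext fun k => ?_), fun j _ hji => ?_⟩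
  · by_cases hk : k ∈ T i
    · exact congrFun heq ⟨k, hk⟩
    · exact sub_eq_zero.1 (hvanish k hk)
  · exact funext fun k => sub_eq_zero.1 (hvanish k (disjoint_left.1 (hT hji) k.2))

end LowerBound

section Indicator

variable {V ι : Type*} [AddCommGroup V] [Module (ZMod 2) V] [Fintype V]

theorem sum_eq_zero_of_add_invariant {M : Type*} [AddCommGroup M] [Module (ZMod 2) M]
    {f : V → M} {w : V} (hw : w ≠ 0) (hf : ∀ x, f (x + w) = f x) : ∑ x, f x = 0 :=
  sum_ninvolution (· + w) (fun x => by rw [hf, ZModModule.add_self])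
    (fun _ _ => by simpa using hw) (fun _ => mem_univ _)
    (fun x => by rw [add_assoc, ZModModule.add_self, add_zero])

theorem cosetIncidence_dotProduct_indicator_eq_zero {U : ι → Submodule (ZMod 2) V}
    {W : Submodule (ZMod 2) V} {i : ι} {w : V} (hwU : w ∈ U i) (hwW : w ∈ W) (hw : w ≠ 0)
    (q : V ⧸ U i) : cosetIncidence U ⟨i, q⟩ ⬝ᵥ (W : Set V).indicator 1 = 0 := by
  refine sum_eq_zero_of_add_invariant hw fun x => ?_
  have hq : (Submodule.Quotient.mk (x + w) : V ⧸ U i) = Submodule.Quotient.mk x := by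
    rw [Submodule.Quotient.eq, add_sub_cancel_left]
    exact hwU
  simp [cosetIncidence, hq, Set.indicator_apply, W.add_mem_iff_left hwW]

theorem indicator_dotProduct_indicator_eq_one_of_disjoint {W W' : Submodule (ZMod 2) V}
    (h : Disjoint W W') :
    (W : Set V).indicator (1 : V → ZMod 2) ⬝ᵥ (W' : Set V).indicator 1 = 1 := by
  have hmem (x : V) : x ∈ W' ∧ x ∈ W ↔ x = 0 :=
    ⟨fun hx => (Submodule.disjoint_def.1 h) x hx.2 hx.1, by rintro rfl; simp⟩
  simp [dotProduct, Set.indicator_apply, ← ite_and, hmem]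

theorem hammingNorm_indicator (W : Submodule (ZMod 2) V) :
    hammingNorm ((W : Set V).indicator (1 : V → ZMod 2)) = Fintype.card W := by
  simp [hammingNorm, Set.indicator_apply, Fintype.card_subtype]

end Indicator

theorem notMem_span_range_of_dotProduct {K R n : Type*} [CommRing K] [Fintype n]
    {H : Matrix R n K} {u c : n → K} (hrows : ∀ r, u ⬝ᵥ H r = 0) (hc : u ⬝ᵥ c ≠ 0) :
    c ∉ Submodule.span K (Set.range H) := fun hmem =>
  hc <| (Submodule.span_le (p := LinearMap.ker (dotProductBilin K K u))).2
    (by rintro _ ⟨r, rfl⟩; exact hrows r) hmem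

theorem cosetIncidence_dotProduct_indicator_coordSpan_eq_zero {κ ι : Type*} [Fintype κ]
    [DecidableEq κ] {U : ι → Submodule (ZMod 2) (κ → ZMod 2)} {T : ι → Finset κ} {T' : Finset κ}
    (hU : ∀ i, U i = coordSpan (ZMod 2) (T i : Set κ)) (hT : ∀ i, ∃ k ∈ T i, k ∈ T')
    (r : (i : ι) × ((κ → ZMod 2) ⧸ U i)) :
    cosetIncidence U r ⬝ᵥ
      (coordSpan (ZMod 2) (T' : Set κ) : Set (κ → ZMod 2)).indicator 1 = 0 := by
  obtain ⟨k, hk, hk'⟩ := hT r.1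
  exact cosetIncidence_dotProduct_indicator_eq_zero (hU r.1 ▸ single_mem_coordSpan (mem_coe.2 hk))
    (single_mem_coordSpan (mem_coe.2 hk')) (Pi.single_ne_zero_iff.2 one_ne_zero) r.2

def xBlock (t : Fin 3) : Finset (Fin 9) :=
  {⟨3 * t.val, by omega⟩, ⟨3 * t.val + 1, by omega⟩, ⟨3 * t.val + 2, by omega⟩}

def zBlock (t : Fin 3) : Finset (Fin 9) :=
  {⟨t.val, by omega⟩, ⟨t.val + 3, by omega⟩, ⟨t.val + 6, by omega⟩}

theorem pairwise_disjoint_xBlock : Pairwise (Disjoint on xBlock) := by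
  change ∀ i j, i ≠ j → Disjoint (xBlock i) (xBlock j)
  decide

theorem pairwise_disjoint_zBlock : Pairwise (Disjoint on zBlock) := by
  change ∀ i j, i ≠ j → Disjoint (zBlock i) (zBlock j)
  decide

theorem Xfam_eq_coordSpan (t : Fin 3) : Xfam t = coordSpan (ZMod 2) (xBlock t : Set (Fin 9)) := by
  simp [Xfam, coordSpan, xBlock, Set.image_insert_eq, e]

theorem Zfam_eq_coordSpan (t : Fin 3) : Zfam t = coordSpan (ZMod 2) (zBlock t : Set (Fin 9)) := by
  simp [Zfam, coordSpan, zBlock, Set.image_insert_eq, e]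

theorem stmt11 :
    (∀ c : V → ZMod 2, HX.mulVec c = 0 → c ∉ rowSpace HZ → 8 ≤ hammingNorm c) ∧
    (∀ c : V → ZMod 2, HZ.mulVec c = 0 → c ∉ rowSpace HX → 8 ≤ hammingNorm c) ∧
    (∃ c : V → ZMod 2, hammingNorm c = 8 ∧
      ((HX.mulVec c = 0 ∧ c ∉ rowSpace HZ) ∨ (HZ.mulVec c = 0 ∧ c ∉ rowSpace HX))) := by
  refine ⟨fun c hc hrow => ?_, fun c hc hrow => ?_, ?_⟩
  · exact two_pow_le_hammingNorm_of_mulVec_eq_zero Xfam_eq_coordSpan pairwise_disjoint_xBlock hc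
      (by rintro rfl; exact hrow (zero_mem _))
  · exact two_pow_le_hammingNorm_of_mulVec_eq_zero Zfam_eq_coordSpan pairwise_disjoint_zBlock hc
      (by rintro rfl; exact hrow (zero_mem _))
  refine ⟨(coordSpan (ZMod 2) (({0, 3, 7} : Finset (Fin 9)) : Set (Fin 9)) : Set V).indicator 1,
    ?_, Or.inl ⟨?_, ?_⟩⟩
  · rw [hammingNorm_indicator, card_coordSpan, ZMod.card]
    rfl
  · exact funext
      (cosetIncidence_dotProduct_indicator_coordSpan_eq_zero Xfam_eq_coordSpan (by decide))
  · refine notMem_span_range_of_dotProduct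
      (u := (coordSpan (ZMod 2) (({1, 2, 6} : Finset (Fin 9)) : Set (Fin 9)) : Set V).indicator 1)
      (fun r => ?_) ?_
    · rw [dotProduct_comm]
      exact cosetIncidence_dotProduct_indicator_coordSpan_eq_zero Zfam_eq_coordSpan (by decide) r
    · have hdisj : Disjoint ({1, 2, 6} : Finset (Fin 9)) {0, 3, 7} := by decide
      rw [indicator_dotProduct_indicator_eq_one_of_disjoint
        (disjoint_coordSpan (disjoint_coe.2 hdisj))]
      exact one_ne_zero
end

section
/- Let H_X, H_Z ∈ 𝔽₂^{m×n} be matrices such that for every row index r of H_X and every row index s of H_Z, the intersection of the supports N_X(r) = {v : H_X(r,v) = 1} and N_Z(s) = {v : H_Z(s,v) = 1} has cardinality 0 or 2. Let P be a positive natural number and let x : {(r,v) : H_X(r,v)=1} → ℤ/Pℤ and z : {(s,v) : H_Z(s,v)=1} → ℤ/Pℤ be shift-label functions satisfying: whenever N_X(r) ∩ N_Z(s) = {v₁, v₂} with v₁ ≠ v₂, one has x(r,v₁) − z(s,v₁) = x(r,v₂) − z(s,v₂) in ℤ/Pℤ. Define the lifted matrices H_X^{(P)}, H_Z^{(P)}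 ∈ 𝔽₂^{mP×nP} by replacing each 1-entry H_X(r,v) by the circulant permutation matrix I_P(x(r,v)), each 1-entry H_Z(s,v) by I_P(z(s,v)), and each 0-entry by the P × P zero matrix. Then H_X^{(P)} · (H_Z^{(P)})ᵀ = 0 over 𝔽₂. -/
/-! Block `(r, s)` of `H_X^{(P)} (H_Z^{(P)})ᵀ` is the sum over `v ∈ N_X(r) ∩ N_Z(s)` of
`I_P(x(r,v)) I_P(z(s,v))ᵀ = I_P(x(r,v) - z(s,v))`. The intersection is empty or a pair
`{v₁, v₂}` on which these shifts agree, so the block is `0` or twice one matrix, which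
vanishes over `𝔽₂`. -/

open Matrix

/-- The `P × P` circulant permutation matrix over `𝔽₂` with shift `t ∈ ℤ/Pℤ`:
its `(i, j)`-entry is `1` if and only if `j = i + t`. -/
def cpm (P : ℕ) (t : ZMod P) : Matrix (ZMod P) (ZMod P) (ZMod 2) :=
  Matrix.of fun i j => if j = i + t then 1 else 0

/-- The support of row `r` of a matrix `H` over `𝔽₂`. -/
def rowSupp {m n : ℕ} (H : Matrix (Fin m) (Fin n) (ZMod 2)) (r : Fin m) : Set (Fin n) :=
  {v : Fin n | H r v = 1}

/-- The `P`-lift of `H ∈ 𝔽₂^{m×n}`: each `1`-entry `H r v` is replaced by the circulant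
permutation matrix of its shift label `lab r v _`, and each `0`-entry by the `P × P`
zero block. -/
def lift {m n : ℕ} (P : ℕ) (H : Matrix (Fin m) (Fin n) (ZMod 2))
    (lab : {p : Fin m × Fin n // H p.1 p.2 = 1} → ZMod P) :
    Matrix (Fin m × ZMod P) (Fin n × ZMod P) (ZMod 2) :=
  Matrix.of fun ri vj =>
    if h : H ri.1 vj.1 = 1 then cpm P (lab ⟨(ri.1, vj.1), h⟩) ri.2 vj.2 else 0

theorem cpm_mul_transpose (P : ℕ) [NeZero P] (a b : ZMod P) :
    cpm P a * (cpm P b)ᵀ = cpm P (a - b) := by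
  ext i j
  simp only [cpm, mul_apply, transpose_apply, of_apply, ite_mul, one_mul, zero_mul,
    Finset.sum_ite_eq', Finset.mem_univ, if_true]
  exact if_congr ⟨fun h => by linear_combination -h, fun h => by linear_combination -h⟩ rfl rfl

theorem CharTwo.sum_eq_zero_of_eq_of_eq_zero_off_pair {R ι : Type*} [Ring R] [CharP R 2]
    [Fintype ι] [DecidableEq ι] {f : ι → R} {a b : ι} (hab : a ≠ b) (hfab : f a = f b)
    (hf : ∀ v, v ≠ a → v ≠ b → f v = 0) : ∑ v, f v = 0 := by
  rw [← Finset.sum_subset (Finset.subset_univ {a, b}) (fun v _ hv => by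
      simp only [Finset.mem_insert, Finset.mem_singleton, not_or] at hv
      exact hf v hv.1 hv.2),
    Finset.sum_pair hab, hfab, CharTwo.add_self_eq_zero]

theorem lift_mul_transpose_lift_apply {m m' n : ℕ} (P : ℕ) [NeZero P]
    (H : Matrix (Fin m) (Fin n) (ZMod 2)) (K : Matrix (Fin m') (Fin n) (ZMod 2))
    (lab : {p : Fin m × Fin n // H p.1 p.2 = 1} → ZMod P)
    (lab' : {p : Fin m' × Fin n // K p.1 p.2 = 1} → ZMod P)
    (r : Fin m) (s : Fin m') (i j : ZMod P) :
    (lift P H lab * (lift P K lab')ᵀ) (r, i) (s, j) =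
      ∑ v, if h : H r v = 1 ∧ K s v = 1 then
        cpm P (lab ⟨(r, v), h.1⟩ - lab' ⟨(s, v), h.2⟩) i j else 0 := by
  rw [mul_apply, Fintype.sum_prod_type]
  refine Finset.sum_congr rfl fun v _ => ?_
  by_cases hH : H r v = 1
  · by_cases hK : K s v = 1
    · simp only [lift, transpose_apply, of_apply, dif_pos hH, dif_pos hK,
        dif_pos (And.intro hH hK), ← cpm_mul_transpose]
      rfl
    · simp [lift, hK]
  · simp [lift, hH]

theorem stmt14 (m n P : ℕ) [NeZero P]
    (HX HZ : Matrix (Fin m) (Fin n) (ZMod 2))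
    (hint : ∀ (r s : Fin m),
      (rowSupp HX r ∩ rowSupp HZ s).ncard = 0 ∨ (rowSupp HX r ∩ rowSupp HZ s).ncard = 2)
    (x : {p : Fin m × Fin n // HX p.1 p.2 = 1} → ZMod P)
    (z : {p : Fin m × Fin n // HZ p.1 p.2 = 1} → ZMod P)
    (hcong : ∀ (r s : Fin m) (v₁ v₂ : Fin n) (h₁ : HX r v₁ = 1) (h₁' : HZ s v₁ = 1)
      (h₂ : HX r v₂ = 1) (h₂' : HZ s v₂ = 1), v₁ ≠ v₂ →
      rowSupp HX r ∩ rowSupp HZ s = {v₁, v₂} →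
      x ⟨(r, v₁), h₁⟩ - z ⟨(s, v₁), h₁'⟩ = x ⟨(r, v₂), h₂⟩ - z ⟨(s, v₂), h₂'⟩) :
    lift P HX x * (lift P HZ z)ᵀ = 0 := by
  ext ⟨r, i⟩ ⟨s, j⟩
  rw [lift_mul_transpose_lift_apply, Matrix.zero_apply]
  rcases hint r s with hempty | hpair
  · have hS : rowSupp HX r ∩ rowSupp HZ s = ∅ := (Set.ncard_eq_zero (Set.toFinite _)).mp hempty
    exact Finset.sum_eq_zero fun v _ => dif_neg fun h => hS.subset h
  · obtain ⟨v₁, v₂, hne, hS⟩ := Set.ncard_eq_two.mp hpair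
    have h₁ : HX r v₁ = 1 ∧ HZ s v₁ = 1 := hS.symm.subset (Set.mem_insert _ _)
    have h₂ : HX r v₂ = 1 ∧ HZ s v₂ = 1 := hS.symm.subset (Set.mem_insert_of_mem _ rfl)
    refine CharTwo.sum_eq_zero_of_eq_of_eq_zero_off_pair hne ?_
      fun v hv₁ hv₂ => dif_neg fun h => ?_
    · rw [dif_pos h₁, dif_pos h₂, hcong r s v₁ v₂ h₁.1 h₁.2 h₂.1 h₂.2 hne hS]
    · have hv : v ∈ rowSupp HX r ∩ rowSupp HZ s := h
      rw [hS] at hv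
      rcases hv with rfl | rfl <;> contradiction
end
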